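/- Let L be the 3-dimensional Lie algebra with [e₁,e₂] = b e₃, [e₂,e₃] = c e₁, [e₁,e₃] = f e₂. Then for any antisymmetric r = r¹²e₁∧e₂ + r¹³e₁∧e₃ + r²³e₂∧e₃, the bracket on L* defined by [e¹,e²]* = f r¹³ e¹ − c r²³ e², [e¹,e³]* = b r¹² e¹ − c r²³ e³, [e²,e³]* = b r¹² e² − f r¹³ e³ satisfies the Jacobi identity for arbitrary values of b, c, f, r¹², r¹³, r²³. -/
import Mathlib


noncomputable section

/-- `e i` is the `i`-th standard basis vector (also used for the dual basis `eⁱ`). -/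
def e (i : Fin 3) : Fin 3 → ℂ := fun j => if j = i then 1 else 0

/-- Bilinear bracket determined by structure constants `c`: `[e i, e j] = ∑ k, c i j k • e k`. -/
def bra (c : Fin 3 → Fin 3 → Fin 3 → ℂ) (x y : Fin 3 → ℂ) : Fin 3 → ℂ :=
  fun k => ∑ i, ∑ j, x i * y j * c i j k

/-- Coordinates of the cobracket `δ(x) = [x⊗1 + 1⊗x, r]` where the r-matrix has
coordinates `ρ`, i.e. `r = ∑ ρ i j • e i ⊗ e j`. -/
def cob (c : Fin 3 → Fin 3 → Fin 3 → ℂ) (ρ : Fin 3 → Fin 3 → ℂ) (x : Fin 3 → ℂ) :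
    Fin 3 → Fin 3 → ℂ :=
  fun a b => ∑ i, ∑ j, ρ i j * (bra c x (e i) a * e j b + e i a * bra c x (e j) b)

/-- The induced bracket on the dual space: `⟨[ξ,η]*, e k⟩ = ⟨ξ ⊗ η, δ(e k)⟩`. -/
def dbra (c : Fin 3 → Fin 3 → Fin 3 → ℂ) (ρ : Fin 3 → Fin 3 → ℂ) (ξ η : Fin 3 → ℂ) :
    Fin 3 → ℂ :=
  fun k => ∑ a, ∑ b, ξ a * η b * cob c ρ (e k) a b

/-- Coordinates of the Schouten bracket
`[r,r]ₛ = [r₁₂,r₁₃] + [r₁₂,r₂₃] + [r₁₃,r₂₃]` in `L⊗L⊗L`. -/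
def sch (c : Fin 3 → Fin 3 → Fin 3 → ℂ) (ρ : Fin 3 → Fin 3 → ℂ) :
    Fin 3 → Fin 3 → Fin 3 → ℂ :=
  fun p q s => ∑ i, ∑ j, ∑ k, ∑ l, ρ i j * ρ k l *
    (c i k p * e j q * e l s + e i p * c j k q * e l s + e i p * e k q * c j l s)

/-- Structure constants (upper-triangular part) of the bracket on `L*`:
`[e¹,e²]* = f r¹³ e¹ − c r²³ e²`, `[e¹,e³]* = b r¹² e¹ − c r²³ e³`,
`[e²,e³]* = b r¹² e² − f r¹³ e³`. -/
def dstar (b cc f r12 r13 r23 : ℂ) : Fin 3 → Fin 3 → Fin 3 → ℂ := fun i j k =>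
  if i = 0 ∧ j = 1 then (if k = 0 then f * r13 else if k = 1 then -(cc * r23) else 0)
  else if i = 0 ∧ j = 2 then (if k = 0 then b * r12 else if k = 2 then -(cc * r23) else 0)
  else if i = 1 ∧ j = 2 then (if k = 1 then b * r12 else if k = 2 then -(f * r13) else 0)
  else 0

/-- The antisymmetrized structure constants of the dual bracket. -/
def cstar (b cc f r12 r13 r23 : ℂ) : Fin 3 → Fin 3 → Fin 3 → ℂ := fun i j k =>
  dstar b cc f r12 r13 r23 i j k - dstar b cc f r12 r13 r23 j i k

/-- The bracket on `L*` given by `[e¹,e²]* = f r¹³ e¹ − c r²³ e²`,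
`[e¹,e³]* = b r¹² e¹ − c r²³ e³`, `[e²,e³]* = b r¹² e² − f r¹³ e³` satisfies the
Jacobi identity for arbitrary values of `b, c, f, r¹², r¹³, r²³`. -/

lemma bra_e (c : Fin 3 → Fin 3 → Fin 3 → ℂ) (i j k : Fin 3) :
    bra c (e i) (e j) k = c i j k := by
  fin_cases i <;> fin_cases j <;>
    simp [bra, e, Fin.sum_univ_three]

lemma bra_nest (c : Fin 3 → Fin 3 → Fin 3 → ℂ) (i j k m : Fin 3) :
    bra c (e i) (bra c (e j) (e k)) m = ∑ l, c j k l * c i l m := by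
  have h : ∀ l, bra c (e j) (e k) l = c j k l := bra_e c j k
  fin_cases i <;>
    simp [bra, e, Fin.sum_univ_three, h]

theorem dual_jacobi (b cc f r12 r13 r23 : ℂ) :
    ∀ i j k : Fin 3,
      bra (cstar b cc f r12 r13 r23) (e i) (bra (cstar b cc f r12 r13 r23) (e j) (e k))
      + bra (cstar b cc f r12 r13 r23) (e j) (bra (cstar b cc f r12 r13 r23) (e k) (e i))
      + bra (cstar b cc f r12 r13 r23) (e k) (bra (cstar b cc f r12 r13 r23) (e i) (e j))
      = 0 := by
  intro i j k
  funext m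
  simp only [Pi.add_apply, Pi.zero_apply, bra_nest, Fin.sum_univ_three]
  fin_cases i <;> fin_cases j <;> fin_cases k <;> fin_cases m <;>
    simp [cstar, dstar] <;> ring
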